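/- Let S₁ be a good set and let Y ∈ S₁ be such that S₁ \ {Y} is not contained in A ∪ C. Then there is exactly one good set S₂ different from S₁ that contains S₁ \ {Y}; namely S₂ = (S₁ \ {Y}) ∪ {Z}, where Z is the unique element of the triple {A_j, B_j, C_j} containing Y that does not belong to S₁. -/

import Mathlib

noncomputable section

/-- The ambient space `ℝ^{2k}`, written as pairs `(x, y)` with `x, y ∈ ℝ^k`. -/
abbrev V (k : ℕ) := (Fin k ⊕ Fin k) → ℝ

/-- `A_j = (e_j, 0)`. -/
def vA (k : ℕ) (j : Fin k) : V k
  | .inl i => if i = j then 1 else 0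
  | .inr _ => 0

/-- `B_j = (1/(2n)) · (2·𝟙 − e_j, 2·𝟙 − e_j)` with `n = 2k − 1`. -/
def vB (k : ℕ) (j : Fin k) : V k
  | .inl i => (2 - if i = j then 1 else 0) / (2 * (2 * (k : ℝ) - 1))
  | .inr i => (2 - if i = j then 1 else 0) / (2 * (2 * (k : ℝ) - 1))

/-- `C_j = (0, e_j)`. -/
def vC (k : ℕ) (j : Fin k) : V k
  | .inl _ => 0
  | .inr i => if i = j then 1 else 0

def setA (k : ℕ) : Set (V k) := Set.range (vA k)
def setB (k : ℕ) : Set (V k) := Set.range (vB k)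
def setC (k : ℕ) : Set (V k) := Set.range (vC k)
def setX (k : ℕ) : Set (V k) := setA k ∪ setB k ∪ setC k

/-- A subset `S ⊆ X` is good if it has exactly `2k` elements, contains no full
triple `{A_j, B_j, C_j}`, and `S ≠ A ∪ C`. -/
def IsGood (k : ℕ) (S : Set (V k)) : Prop :=
  S ⊆ setX k ∧ S.ncard = 2 * k ∧
  (∀ j : Fin k, ¬ (({vA k j, vB k j, vC k j} : Set (V k)) ⊆ S)) ∧
  S ≠ setA k ∪ setC k

def Delta0 (k : ℕ) : Set (V k) := convexHull ℝ (setA k ∪ setC k)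
def Delta1 (k : ℕ) : Set (V k) := convexHull ℝ (setA k ∪ setB k)
def Delta2 (k : ℕ) : Set (V k) := convexHull ℝ (setB k ∪ setC k)

/-- The modular block `Ω = closure(Δ₀ \ (Δ₁ ∪ Δ₂))`. -/
def OmegaB (k : ℕ) : Set (V k) := closure (Delta0 k \ (Delta1 k ∪ Delta2 k))

/-! The triples `{A_j, B_j, C_j}` partition `X` into `k` blocks of three points, so a `2k`-element
subset of `X` containing no full triple misses exactly one point of every triple. Exchanging `Y`
for the missing point `Z` of its triple therefore gives a good set (it differs from `A ∪ C`
because it contains `S₁ \ {Y}`). Conversely, a good `S₂ ≠ S₁` containing `S₁ \ {Y}` is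
`S₁ \ {Y}` plus one point `w ∉ S₁`; if `w` lay in another triple, that whole triple would lie
in `S₂`, so `w` is the missing point `Z` of the triple of `Y`. -/

open scoped Function

section Blocks

variable {α ι : Type*} {T : ι → Set α} {S S' : Set α}

theorem exists_sdiff_eq_singleton_of_ncard_eq_mul [Fintype ι] {m : ℕ}
    (hT : Pairwise (Disjoint on T)) (hTcard : ∀ i, (T i).ncard = m + 1)
    (hS : S ⊆ ⋃ i, T i) (hScard : S.ncard = m * Fintype.card ι) (hfull : ∀ i, ¬ T i ⊆ S)
    (i : ι) : ∃ z, T i \ S = {z} := by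
  have hTfin : ∀ i, (T i).Finite := fun i ↦ Set.finite_of_ncard_pos (by rw [hTcard]; omega)
  have hlt : ∀ i, (S ∩ T i).ncard < m + 1 := fun i ↦ hTcard i ▸
    Set.ncard_lt_ncard ⟨Set.inter_subset_right, fun h ↦ hfull i (h.trans Set.inter_subset_left)⟩
      (hTfin i)
  have hsum : ∑ i, (S ∩ T i).ncard = ∑ _ : ι, m := by
    rw [← finsum_eq_sum_of_fintype, ← Set.ncard_iUnion_of_finite
      (fun i ↦ (hTfin i).inter_of_right S)
      (fun i j hij ↦ (hT hij).mono Set.inter_subset_right Set.inter_subset_right),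
      ← Set.inter_iUnion, Set.inter_eq_left.mpr hS, hScard]
    simp [mul_comm]
  have hm : (S ∩ T i).ncard = m :=
    (Finset.sum_eq_sum_iff_of_le fun i _ ↦ Nat.le_of_lt_succ (hlt i)).mp hsum i
      (Finset.mem_univ i)
  rw [← Set.ncard_eq_one, ← Set.sdiff_inter_self_eq_sdiff,
    Set.ncard_sdiff Set.inter_subset_right ((hTfin i).inter_of_right S), hm, hTcard]
  omega

theorem exists_notMem_eq_insert_sdiff_singleton {Y : α} (hS : S.Finite) (hY : Y ∈ S)
    (hcard : S'.ncard = S.ncard) (hne : S' ≠ S) (hsub : S \ {Y} ⊆ S') :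
    ∃ w ∉ S, S' = insert w (S \ {Y}) := by
  have hpos : 0 < S.ncard := (Set.ncard_pos hS).mpr ⟨Y, hY⟩
  obtain ⟨w, hw⟩ : ∃ w, S' \ (S \ {Y}) = {w} := by
    rw [← Set.ncard_eq_one, Set.ncard_sdiff hsub hS.sdiff, Set.ncard_sdiff_singleton_of_mem hY,
      hcard]
    omega
  have hS'eq : S' = insert w (S \ {Y}) := by
    rw [← Set.union_singleton, ← hw, Set.union_sdiff_cancel hsub]
  have hwS' : w ∈ S' \ (S \ {Y}) := hw ▸ rfl
  refine ⟨w, fun hwS ↦ hne ?_, hS'eq⟩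
  have hwY : w = Y := by_contra fun h ↦ hwS'.2 ⟨hwS, h⟩
  rw [hS'eq, hwY, Set.insert_sdiff_singleton, Set.insert_eq_of_mem hY]

theorem mem_of_insert_sdiff_singleton_subset (hT : Pairwise (Disjoint on T))
    (hS : ∀ i, (T i \ S).Subsingleton) (hS'cover : S' ⊆ ⋃ i, T i) (hS'full : ∀ i, ¬ T i ⊆ S')
    {Y w : α} {j : ι} (hY : Y ∈ T j) (hw : w ∉ S) (hsub : insert w (S \ {Y}) ⊆ S') :
    w ∈ T j := by
  obtain ⟨i, hwi⟩ := Set.mem_iUnion.mp (hS'cover (hsub (Set.mem_insert w _)))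
  obtain rfl | hij := eq_or_ne i j
  · exact hwi
  refine absurd (fun x hx ↦ ?_) (hS'full i)
  by_cases hxS : x ∈ S
  · exact hsub (Or.inr ⟨hxS, fun hxY ↦ Set.disjoint_left.mp (hT hij) hx (hxY ▸ hY)⟩)
  · exact hS i ⟨hx, hxS⟩ ⟨hwi, hw⟩ ▸ hsub (Set.mem_insert w _)

theorem not_subset_insert_sdiff_singleton (hT : Pairwise (Disjoint on T))
    (hfull : ∀ i, ¬ T i ⊆ S) {Y Z : α} {j : ι} (hY : Y ∈ T j) (hZ : Z ∈ T j) (hYZ : Y ≠ Z)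
    (i : ι) : ¬ T i ⊆ insert Z (S \ {Y}) := by
  intro h
  obtain rfl | hij := eq_or_ne i j
  · rcases h hY with hYZ' | hYS
    · exact hYZ hYZ'
    · exact hYS.2 rfl
  · refine hfull i fun x hx ↦ ?_
    rcases h hx with rfl | hxS
    · exact absurd hZ (Set.disjoint_left.mp (hT hij) hx)
    · exact hxS.1

end Blocks

section Triples

variable {k : ℕ}

theorem vB_pos (j : Fin k) (x : Fin k ⊕ Fin k) : 0 < vB k j x := by
  have hk : (1 : ℝ) ≤ k := by exact_mod_cast j.pos
  have hnum : ∀ i : Fin k, (0 : ℝ) < 2 - if i = j then 1 else 0 := fun i ↦ by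
    split_ifs <;> norm_num
  cases x <;> exact div_pos (hnum _) (by linarith)

theorem vA_injective : Function.Injective (vA k) := fun i j h ↦ by
  simpa [vA] using congrFun h (.inl i)

theorem vB_injective : Function.Injective (vB k) := fun i j h ↦ by
  have hd : 2 * (2 * (k : ℝ) - 1) ≠ 0 := by
    have hk : (1 : ℝ) ≤ k := by exact_mod_cast i.pos
    linarith
  simpa [vB, div_left_inj' hd] using congrFun h (.inl i)

theorem vC_injective : Function.Injective (vC k) := fun i j h ↦ by
  simpa [vC] using congrFun h (.inr i)

theorem vA_ne_vB (i j : Fin k) : vA k i ≠ vB k j := fun h ↦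
  (vB_pos j (.inr i)).ne (by simpa [vA] using congrFun h (.inr i))

theorem vA_ne_vC (i j : Fin k) : vA k i ≠ vC k j := fun h ↦ by
  simpa [vA, vC] using congrFun h (.inl i)

theorem vB_ne_vC (i j : Fin k) : vB k i ≠ vC k j := fun h ↦
  (vB_pos i (.inl j)).ne' (by simpa [vC] using congrFun h (.inl j))

def triple (k : ℕ) (j : Fin k) : Set (V k) := {vA k j, vB k j, vC k j}

theorem ncard_triple (j : Fin k) : (triple k j).ncard = 3 :=
  Set.ncard_eq_three.mpr ⟨_, _, _, vA_ne_vB j j, vA_ne_vC j j, vB_ne_vC j j, rfl⟩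

theorem pairwise_disjoint_triple : Pairwise (Disjoint on triple k) := fun i j hij ↦ by
  simp [Function.onFun, triple, vA_injective.eq_iff, vB_injective.eq_iff, vC_injective.eq_iff,
    hij.symm, vA_ne_vB, vA_ne_vC, vB_ne_vC, (vA_ne_vB _ _).symm, (vA_ne_vC _ _).symm,
    (vB_ne_vC _ _).symm]

theorem setX_eq_iUnion_triple : setX k = ⋃ j, triple k j := by
  ext x
  simp only [setX, setA, setB, setC, triple, Set.mem_union, Set.mem_range, Set.mem_iUnion,
    Set.mem_insert_iff, Set.mem_singleton_iff]
  grind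

theorem setX_finite : (setX k).Finite :=
  ((Set.finite_range _).union (Set.finite_range _)).union (Set.finite_range _)

end Triples

section Good

variable {k : ℕ} {S₁ S₂ : Set (V k)} {Y Z : V k} {j : Fin k}

theorem IsGood.exists_triple_sdiff_eq_singleton (h : IsGood k S₁) (j : Fin k) :
    ∃ z, triple k j \ S₁ = {z} :=
  exists_sdiff_eq_singleton_of_ncard_eq_mul pairwise_disjoint_triple ncard_triple
    (setX_eq_iUnion_triple ▸ h.1) (by rw [h.2.1, Fintype.card_fin]) h.2.2.1 j

theorem IsGood.insert_sdiff_singleton (h₁ : IsGood k S₁) (hY : Y ∈ S₁) (hYj : Y ∈ triple k j)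
    (hZj : Z ∈ triple k j) (hZ : Z ∉ S₁) (hAC : ¬ S₁ \ {Y} ⊆ setA k ∪ setC k) :
    IsGood k (insert Z (S₁ \ {Y})) := by
  have hsub : S₁ \ {Y} ⊆ setX k := Set.sdiff_subset.trans h₁.1
  refine ⟨Set.insert_subset (setX_eq_iUnion_triple ▸ Set.mem_iUnion_of_mem j hZj) hsub, ?_,
    not_subset_insert_sdiff_singleton pairwise_disjoint_triple h₁.2.2.1 hYj hZj
      (ne_of_mem_of_not_mem hY hZ), fun h ↦ hAC (h ▸ Set.subset_insert _ _)⟩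
  rw [Set.ncard_insert_of_notMem (fun h ↦ hZ h.1) (setX_finite.subset hsub),
    Set.ncard_sdiff_singleton_of_mem hY, h₁.2.1]
  have := j.pos
  omega

theorem IsGood.eq_insert_sdiff_singleton (h₁ : IsGood k S₁) (h₂ : IsGood k S₂) (hne : S₂ ≠ S₁)
    (hY : Y ∈ S₁) (hYj : Y ∈ triple k j) (hZj : Z ∈ triple k j) (hZ : Z ∉ S₁)
    (hsub : S₁ \ {Y} ⊆ S₂) : S₂ = insert Z (S₁ \ {Y}) := by
  have hmiss : ∀ i, (triple k i \ S₁).Subsingleton := fun i ↦ by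
    obtain ⟨z, hz⟩ := h₁.exists_triple_sdiff_eq_singleton i
    exact hz ▸ Set.subsingleton_singleton
  obtain ⟨w, hw, rfl⟩ := exists_notMem_eq_insert_sdiff_singleton (setX_finite.subset h₁.1)
    hY (h₂.2.1.trans h₁.2.1.symm) hne hsub
  have hwj : w ∈ triple k j := mem_of_insert_sdiff_singleton_subset pairwise_disjoint_triple
    hmiss (setX_eq_iUnion_triple ▸ h₂.1) h₂.2.2.1 hYj hw subset_rfl
  rw [hmiss j ⟨hwj, hw⟩ ⟨hZj, hZ⟩]

end Good

theorem stmt_6_general (k : ℕ) (S₁ : Set (V k)) (hS₁ : IsGood k S₁)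
    (Y : V k) (hY : Y ∈ S₁) (hnot : ¬ (S₁ \ {Y} ⊆ setA k ∪ setC k)) :
    (∃! S₂ : Set (V k), IsGood k S₂ ∧ S₂ ≠ S₁ ∧ S₁ \ {Y} ⊆ S₂) ∧
    (∀ j : Fin k, Y ∈ ({vA k j, vB k j, vC k j} : Set (V k)) →
      ∀ Z ∈ ({vA k j, vB k j, vC k j} : Set (V k)), Z ∉ S₁ →
        ∀ S₂ : Set (V k), IsGood k S₂ → S₂ ≠ S₁ → S₁ \ {Y} ⊆ S₂ →
          S₂ = (S₁ \ {Y}) ∪ {Z}) := by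
  obtain ⟨j, hYj⟩ := Set.mem_iUnion.mp (setX_eq_iUnion_triple ▸ hS₁.1 hY)
  obtain ⟨Z, hZ⟩ := hS₁.exists_triple_sdiff_eq_singleton j
  have hZj : Z ∈ triple k j \ S₁ := hZ ▸ rfl
  simp only [Set.union_singleton]
  refine ⟨⟨insert Z (S₁ \ {Y}), ⟨hS₁.insert_sdiff_singleton hY hYj hZj.1 hZj.2 hnot,
    fun h ↦ hZj.2 (h ▸ Set.mem_insert _ _), Set.subset_insert _ _⟩,
    fun S₂ ⟨h₂, hne, hsub⟩ ↦ hS₁.eq_insert_sdiff_singleton h₂ hne hY hYj hZj.1 hZj.2 hsub⟩, ?_⟩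
  intro j' hYj' Z' hZj' hZ' S₂ h₂ hne hsub
  exact hS₁.eq_insert_sdiff_singleton h₂ hne hY hYj' hZj' hZ' hsub

/-- Let `S₁` be good and `Y ∈ S₁` with `S₁ \ {Y} ⊄ A ∪ C`.  There is exactly one good
set `S₂ ≠ S₁` containing `S₁ \ {Y}`; namely `S₂ = (S₁ \ {Y}) ∪ {Z}` where `Z` is the
element of the triple `{A_j, B_j, C_j}` containing `Y` that does not belong to `S₁`. -/
theorem stmt_6 (k : ℕ) (hk : 2 ≤ k) (S₁ : Set (V k)) (hS₁ : IsGood k S₁)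
    (Y : V k) (hY : Y ∈ S₁) (hnot : ¬ (S₁ \ {Y} ⊆ setA k ∪ setC k)) :
    (∃! S₂ : Set (V k), IsGood k S₂ ∧ S₂ ≠ S₁ ∧ S₁ \ {Y} ⊆ S₂) ∧
    (∀ j : Fin k, Y ∈ ({vA k j, vB k j, vC k j} : Set (V k)) →
      ∀ Z ∈ ({vA k j, vB k j, vC k j} : Set (V k)), Z ∉ S₁ →
        ∀ S₂ : Set (V k), IsGood k S₂ → S₂ ≠ S₁ → S₁ \ {Y} ⊆ S₂ →
          S₂ = (S₁ \ {Y}) ∪ {Z}) :=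
  stmt_6_general k S₁ hS₁ Y hY hnot
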